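/- For nonnegative integers k, m, the odd-odd moments of the Bernoulli lemniscate domain satisfy M_{2k+1,2m+1}(Ω) = (1/(2(k+m+2))) · C(k+m+2, k+1), where C denotes the binomial coefficient. -/

import Mathlib

set_option autoImplicit false

open MeasureTheory Real

/-- The Bernoulli lemniscate domain Ω = {z : |z² - 1| < 1}. -/
noncomputable def bernoulliLemniscate : Set ℂ := {z : ℂ | ‖z ^ 2 - 1‖ < 1}

/-- The complex moment `M_{p,q}(Ω) = (1/π) ∫_Ω z^p conj(z)^q dA`. -/
noncomputable def complexMoment (p q : ℕ) : ℂ :=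
  (1 / (π : ℂ)) * ∫ z in bernoulliLemniscate, z ^ p * (starRingEnd ℂ z) ^ q

/-!
In polar coordinates `z = r e^{iθ}` the lemniscate is `r² < 2 cos 2θ` and
`z^p z̄^q = r^{p+q} e^{i(p-q)θ}`. Integrating out `r` leaves, with `N = k + m + 2`,
`(2N)⁻¹ ∫_{-π}^{π} (2 cos 2θ)₊^N e^{2i(k-m)θ} dθ`. The integrand is `π`-periodic, so after
`φ = 2θ` only the lobe `|φ| < π/2` contributes. There `(2 cos φ)^N = (e^{iφ} + e^{-iφ})^N`, and
in the binomial expansion only the term of constant phase survives integration over the lobe,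
leaving `π C(N, m+1)`.
-/

open Set

theorem Complex.integrableOn_polarCoord_symm_smul {E : Type*} [NormedAddCommGroup E]
    [NormedSpace ℝ E] {f : ℂ → E} (hf : Integrable f) :
    IntegrableOn (fun p : ℝ × ℝ ↦ p.1 • f (Complex.polarCoord.symm p)) polarCoord.target := by
  have hg : Integrable (f ∘ measurableEquivRealProd.symm) :=
    (volume_preserving_equiv_real_prod.symm).integrable_comp_emb
      measurableEquivRealProd.symm.measurableEmbedding |>.2 hf
  have h := (integrableOn_image_iff_integrableOn_abs_det_fderiv_smul volume
    polarCoord.open_target.measurableSet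
    (fun p _ ↦ (hasFDerivAt_polarCoord_symm p).hasFDerivWithinAt) polarCoord.symm.injOn _).1
    hg.integrableOn
  refine h.congr_fun (fun p (hp : 0 < p.1 ∧ _) ↦ ?_) polarCoord.open_target.measurableSet
  simp only [det_fderivPolarCoordSymm, abs_of_pos hp.1, Function.comp_apply,
    measurableEquivRealProd_symm_polarCoord_symm_apply]

theorem Complex.integral_eq_integral_polarCoord {E : Type*} [NormedAddCommGroup E]
    [NormedSpace ℝ E] {f : ℂ → E} (hf : Integrable f) :
    ∫ z, f z = ∫ θ in Ioo (-π) π, ∫ r in Ioi 0, r • f (Complex.polarCoord.symm (r, θ)) := by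
  have h := integrableOn_polarCoord_symm_smul hf
  rw [polarCoord_target, IntegrableOn, Measure.volume_eq_prod, ← Measure.prod_restrict] at h
  rw [← Complex.integral_comp_polarCoord_symm, polarCoord_target, Measure.volume_eq_prod,
    ← setIntegral_prod_swap,
    setIntegral_prod _ (by rw [IntegrableOn, ← Measure.prod_restrict]; exact h.swap)]
  rfl

theorem Complex.polarCoord_symm_eq_ofReal_mul_exp (r θ : ℝ) :
    Complex.polarCoord.symm (r, θ) = r * Complex.exp (θ * Complex.I) := by
  rw [Complex.polarCoord_symm_apply, Complex.exp_mul_I]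
  push_cast
  ring

theorem Complex.polarCoord_symm_pow_mul_conj_pow (p q : ℕ) (r θ : ℝ) :
    Complex.polarCoord.symm (r, θ) ^ p * (starRingEnd ℂ (Complex.polarCoord.symm (r, θ))) ^ q =
      (r : ℂ) ^ (p + q) * Complex.exp ((p - q) * θ * Complex.I) := by
  rw [polarCoord_symm_eq_ofReal_mul_exp, map_mul, Complex.conj_ofReal, ← Complex.exp_conj,
    map_mul, Complex.conj_ofReal, Complex.conj_I, mul_pow, mul_pow, ← Complex.exp_nat_mul,
    ← Complex.exp_nat_mul, mul_mul_mul_comm, ← Complex.exp_add, pow_add]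
  ring_nf

theorem Function.Periodic.intervalIntegral_comp_nat_mul {E : Type*} [NormedAddCommGroup E]
    [NormedSpace ℝ E] {f : ℝ → E} {T : ℝ} (hf : Function.Periodic f T)
    (hfi : ∀ a b, IntervalIntegrable f volume a b) {n : ℕ} (hn : n ≠ 0) (t : ℝ) :
    ∫ x in t..t + T, f (n * x) = ∫ x in t..t + T, f x := by
  have hn' : (n : ℝ) ≠ 0 := Nat.cast_ne_zero.2 hn
  rw [intervalIntegral.integral_comp_mul_left f hn', mul_add,
    show (n : ℝ) * T = (n : ℤ) • T by simp, hf.intervalIntegral_add_zsmul_eq _ _ hfi,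
    hf.intervalIntegral_add_eq _ t, natCast_zsmul, ← Nat.cast_smul_eq_nsmul ℝ,
    inv_smul_smul₀ hn']

theorem integral_exp_two_int_mul_I (j : ℤ) :
    ∫ φ in -(π / 2)..π / 2, Complex.exp (2 * j * Complex.I * φ) =
      if j = 0 then (π : ℂ) else 0 := by
  split_ifs with hj
  · simp [hj]
  have hc : 2 * (j : ℂ) * Complex.I ≠ 0 := by simp [hj]
  have hperiod : 2 * j * Complex.I * ((π / 2 : ℝ) : ℂ) =
      2 * j * Complex.I * ((-(π / 2) : ℝ) : ℂ) + j * (2 * π * Complex.I) := by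
    push_cast
    ring
  rw [integral_exp_mul_complex hc, hperiod, Complex.exp_add, Complex.exp_int_mul_two_pi_mul_I,
    mul_one, sub_self, zero_div]

theorem integral_two_cos_pow_mul_exp (a b : ℕ) :
    ∫ φ in -(π / 2)..π / 2, (2 * Complex.cos φ) ^ (a + b) * Complex.exp ((a - b) * φ * Complex.I) =
      π * (a + b).choose b := by
  have hexpand (φ : ℝ) :
      (2 * Complex.cos φ) ^ (a + b) * Complex.exp ((a - b) * φ * Complex.I) =
        ∑ r ∈ Finset.range (a + b + 1),
          ((a + b).choose r : ℂ) * Complex.exp (2 * ((r - b : ℤ) : ℂ) * Complex.I * φ) := by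
    rw [Complex.two_cos, add_pow, Finset.sum_mul]
    refine Finset.sum_congr rfl fun r hr ↦ ?_
    have hr : r ≤ a + b := Nat.lt_succ_iff.1 (Finset.mem_range.1 hr)
    rw [← Complex.exp_nat_mul, ← Complex.exp_nat_mul, mul_right_comm, mul_comm,
      ← Complex.exp_add, ← Complex.exp_add, Nat.cast_sub hr]
    push_cast
    ring_nf
  simp_rw [hexpand]
  rw [intervalIntegral.integral_finsetSum
    fun r _ ↦ (by fun_prop : Continuous _).intervalIntegrable _ _]
  simp_rw [intervalIntegral.integral_const_mul, integral_exp_two_int_mul_I, sub_eq_zero,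
    Nat.cast_inj, mul_ite, mul_zero, Finset.sum_ite_eq',
    Finset.mem_range.2 (by omega : b < a + b + 1), if_true]
  ring

theorem integral_sqrt_two_cos_two_mul_pow_mul_exp {a b : ℕ} (hab : a + b ≠ 0) :
    ∫ θ in -π..π, (√(2 * cos (2 * θ)) : ℂ) ^ (2 * (a + b)) *
        Complex.exp ((a - b) * (2 * θ : ℝ) * Complex.I) = π * (a + b).choose b := by
  set F : ℝ → ℂ := fun φ ↦
    (√(2 * cos φ) : ℂ) ^ (2 * (a + b)) * Complex.exp ((a - b) * φ * Complex.I)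
  have hFi (s t : ℝ) : IntervalIntegrable F volume s t :=
    (by fun_prop : Continuous F).intervalIntegrable s t
  have hperiodic : Function.Periodic F (2 * π) := by
    intro φ
    have : ((a : ℂ) - b) * (φ + 2 * π : ℝ) * Complex.I =
        (a - b) * φ * Complex.I + ((a - b : ℤ) : ℂ) * (2 * π * Complex.I) := by
      push_cast
      ring
    simp only [F, cos_add_two_pi, this, Complex.exp_add, Complex.exp_int_mul_two_pi_mul_I,
      mul_one]
  have hvanish : ∫ φ in π / 2..π / 2 + π, F φ = 0 := by
    refine intervalIntegral.integral_congr (g := 0) (fun φ hφ ↦ ?_) |>.trans (by simp)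
    rw [uIcc_of_le (by linarith [pi_pos])] at hφ
    have : 2 * cos φ ≤ 0 := by
      nlinarith [cos_nonpos_of_pi_div_two_le_of_le hφ.1 (by linarith [hφ.2])]
    simp only [F, sqrt_eq_zero'.2 this, Complex.ofReal_zero, Pi.zero_apply]
    rw [zero_pow (by omega), zero_mul]
  have hlobe : EqOn F
      (fun φ ↦ (2 * Complex.cos φ) ^ (a + b) * Complex.exp ((a - b) * φ * Complex.I))
      (uIcc (-(π / 2)) (π / 2)) := by
    intro φ hφ
    rw [uIcc_of_le (by linarith [pi_pos])] at hφ
    have : 0 ≤ 2 * cos φ := by nlinarith [cos_nonneg_of_mem_Icc hφ]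
    simp only [F, pow_mul, ← Complex.ofReal_pow, sq_sqrt this]
    push_cast
    rfl
  calc ∫ θ in -π..π, F (2 * θ)
      = ∫ φ in -π..π, F φ := by
        have := hperiodic.intervalIntegral_comp_nat_mul hFi two_ne_zero (-π)
        rwa [Nat.cast_ofNat, show -π + 2 * π = π by ring] at this
    _ = ∫ φ in -(π / 2)..π / 2 + π, F φ := by
        convert hperiodic.intervalIntegral_add_eq (-π) (-(π / 2)) using 2 <;> ring
    _ = π * (a + b).choose b := by
        rw [← intervalIntegral.integral_add_adjacent_intervals (hFi _ (π / 2)) (hFi _ _),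
          hvanish, add_zero, intervalIntegral.integral_congr hlobe, integral_two_cos_pow_mul_exp]

theorem measurableSet_bernoulliLemniscate : MeasurableSet bernoulliLemniscate :=
  (isOpen_lt (by fun_prop) continuous_const).measurableSet

theorem bernoulliLemniscate_subset_closedBall : bernoulliLemniscate ⊆ Metric.closedBall 0 2 := by
  intro z (hz : ‖z ^ 2 - 1‖ < 1)
  have := norm_le_norm_sub_add (z ^ 2) 1
  rw [norm_pow, norm_one] at this
  rw [mem_closedBall_zero_iff]
  nlinarith [norm_nonneg z]

theorem Continuous.integrableOn_bernoulliLemniscate {E : Type*} [NormedAddCommGroup E]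
    {f : ℂ → E} (hf : Continuous f) : IntegrableOn f bernoulliLemniscate :=
  (hf.continuousOn.integrableOn_compact (isCompact_closedBall 0 2)).mono_set
    bernoulliLemniscate_subset_closedBall

theorem polarCoord_symm_mem_bernoulliLemniscate_iff {r : ℝ} (θ : ℝ) (hr : 0 < r) :
    Complex.polarCoord.symm (r, θ) ∈ bernoulliLemniscate ↔ r < √(2 * cos (2 * θ)) := by
  have hsq : Complex.polarCoord.symm (r, θ) ^ 2 =
      (r ^ 2 : ℝ) * Complex.exp ((2 * θ : ℝ) * Complex.I) := by
    rw [Complex.polarCoord_symm_eq_ofReal_mul_exp, mul_pow, ← Complex.exp_nat_mul]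
    push_cast
    ring_nf
  have hnorm : ‖Complex.polarCoord.symm (r, θ) ^ 2 - 1‖ ^ 2 =
      r ^ 4 - 2 * r ^ 2 * cos (2 * θ) + 1 := by
    rw [Complex.sq_norm, Complex.normSq_sub, hsq, map_mul, Complex.normSq_ofReal,
      Complex.normSq_eq_norm_sq (Complex.exp _), Complex.norm_exp_ofReal_mul_I, map_one, map_one,
      mul_one, Complex.re_ofReal_mul, Complex.exp_ofReal_mul_I_re]
    ring
  rw [lt_sqrt hr.le, bernoulliLemniscate, mem_ofPred_eq, ← sq_lt_one_iff₀ (norm_nonneg _), hnorm]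
  constructor <;> intro h <;> nlinarith [pow_pos hr 2]

/-- Since `√x = 0` for `x ≤ 0`, this also covers the rays that miss the lemniscate. -/
theorem integral_Ioi_smul_indicator_bernoulliLemniscate (p q : ℕ) (θ : ℝ) :
    ∫ r in Ioi 0, r • bernoulliLemniscate.indicator (fun z ↦ z ^ p * starRingEnd ℂ z ^ q)
        (Complex.polarCoord.symm (r, θ)) =
      (√(2 * cos (2 * θ)) : ℂ) ^ (p + q + 2) / (p + q + 2) *
        Complex.exp ((p - q) * θ * Complex.I) := by
  set R := √(2 * cos (2 * θ))
  have hray : EqOn (fun r : ℝ ↦ r • bernoulliLemniscate.indicator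
      (fun z ↦ z ^ p * starRingEnd ℂ z ^ q) (Complex.polarCoord.symm (r, θ)))
      ((Ioo 0 R).indicator fun r : ℝ ↦
        (r : ℂ) ^ (p + q + 1) * Complex.exp ((p - q) * θ * Complex.I))
      (Ioi 0) := by
    intro r (hr : 0 < r)
    dsimp only
    by_cases h : r < R
    · rw [indicator_of_mem ((polarCoord_symm_mem_bernoulliLemniscate_iff θ hr).2 h),
        indicator_of_mem (show r ∈ Ioo 0 R from ⟨hr, h⟩),
        Complex.polarCoord_symm_pow_mul_conj_pow, Complex.real_smul]
      ring
    · rw [indicator_of_notMem (mt (polarCoord_symm_mem_bernoulliLemniscate_iff θ hr).1 h),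
        indicator_of_notMem (fun hr' ↦ h hr'.2), smul_zero]
  rw [setIntegral_congr_fun measurableSet_Ioi hray, setIntegral_indicator measurableSet_Ioo,
    inter_eq_right.2 Ioo_subset_Ioi_self, ← integral_Ioc_eq_integral_Ioo,
    ← intervalIntegral.integral_of_le (sqrt_nonneg _), intervalIntegral.integral_mul_const,
    ← intervalIntegral.integral_congr (fun x _ ↦ Complex.ofReal_pow x _),
    intervalIntegral.integral_ofReal, integral_pow]
  push_cast
  ring

/-- Odd-odd moments of the Bernoulli lemniscate:
`M_{2k+1,2m+1}(Ω) = (1/(2(k+m+2))) * C(k+m+2, k+1)`. -/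
theorem bernoulli_odd_odd_moments (k m : ℕ) :
    complexMoment (2 * k + 1) (2 * m + 1) =
      ((1 : ℂ) / (2 * ((k : ℂ) + m + 2))) * (Nat.choose (k + m + 2) (k + 1) : ℂ) := by
  have hint : IntegrableOn (fun z : ℂ ↦ z ^ (2 * k + 1) * starRingEnd ℂ z ^ (2 * m + 1))
      bernoulliLemniscate := Continuous.integrableOn_bernoulliLemniscate (by fun_prop)
  have hshape (θ : ℝ) :
      (√(2 * cos (2 * θ)) : ℂ) ^ (2 * k + 1 + (2 * m + 1) + 2) /
          ((2 * k + 1 : ℕ) + (2 * m + 1 : ℕ) + 2) *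
        Complex.exp (((2 * k + 1 : ℕ) - (2 * m + 1 : ℕ)) * θ * Complex.I) =
      (2 * ((k : ℂ) + m + 2))⁻¹ * ((√(2 * cos (2 * θ)) : ℂ) ^ (2 * ((k + 1) + (m + 1))) *
        Complex.exp (((k + 1 : ℕ) - (m + 1 : ℕ)) * (2 * θ : ℝ) * Complex.I)) := by
    rw [show 2 * k + 1 + (2 * m + 1) + 2 = 2 * ((k + 1) + (m + 1)) by ring]
    push_cast
    ring_nf
  rw [complexMoment, ← integral_indicator measurableSet_bernoulliLemniscate,
    Complex.integral_eq_integral_polarCoord (hint.integrable_indicator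
      measurableSet_bernoulliLemniscate)]
  simp_rw [integral_Ioi_smul_indicator_bernoulliLemniscate, hshape]
  rw [← integral_Ioc_eq_integral_Ioo, ← intervalIntegral.integral_of_le (by linarith [pi_pos]),
    intervalIntegral.integral_const_mul, integral_sqrt_two_cos_two_mul_pow_mul_exp (by omega),
    ← Nat.choose_symm_add, show k + 1 + (m + 1) = k + m + 2 by ring]
  field_simp
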